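/- (Gauss) For every real x with |x| < 1, K(x) = (π/2) · 1/M(1+x, 1−x), where K is the complete elliptic integral of the first kind and M is the arithmetic–geometric mean. -/

import Mathlib

/-!
Put `I(a, b) = ∫₀^{π/2} dθ / √(a² cos² θ + b² sin² θ)`, so that `K(x) = I(1, √(1 - x²))`.
The substitution `t = b tan θ` turns `I(a, b)` into `∫₀^∞ dt / √((a² + t²)(b² + t²))`, and in that
form Landen's substitution `t ↦ (t - ab/t) / 2` shows that `I` is invariant under the AGM step
`(a, b) ↦ ((a + b) / 2, √(ab))`. Hence `I(a, b) = I(aₙ, bₙ) ∈ [π / (2 aₙ), π / (2 bₙ)]` for all `n`,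
and both bounds tend to `π / (2 M(a, b))`.
-/

open Real Filter Topology

/-- The pair of sequences defined by iterating the arithmetic mean and the geometric mean. -/
noncomputable def agmSeq (a b : ℝ) : ℕ → ℝ × ℝ
  | 0 => (a, b)
  | n + 1 => (((agmSeq a b n).1 + (agmSeq a b n).2) / 2,
      Real.sqrt ((agmSeq a b n).1 * (agmSeq a b n).2))

/-- The arithmetic–geometric mean of `a` and `b`: the common limit of the two sequences. -/
noncomputable def agm (a b : ℝ) : ℝ :=
  limUnder atTop (fun n => (agmSeq a b n).1)

/-- The complete elliptic integral of the first kind. -/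
noncomputable def ellipticK (x : ℝ) : ℝ :=
  ∫ φ in (0 : ℝ)..(π / 2), 1 / Real.sqrt (1 - x ^ 2 * Real.sin φ ^ 2)

open Set MeasureTheory
open scoped NNReal

theorem agmSeq_succ' (a b : ℝ) (n : ℕ) :
    agmSeq a b (n + 1) = agmSeq ((a + b) / 2) (√(a * b)) n := by
  induction n with
  | zero => rfl
  | succ n ih => rw [agmSeq, ih]; rfl

-- Mathlib's `NNReal.agmSequences` starts one step in, and lists the geometric mean first.
theorem agmSeq_succ_eq_agmSequences (x y : ℝ≥0) (n : ℕ) :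
    agmSeq x y (n + 1) =
      (((NNReal.agmSequences x y n).2 : ℝ), ((NNReal.agmSequences x y n).1 : ℝ)) := by
  induction n with
  | zero => simp [agmSeq]
  | succ n ih =>
    rw [agmSeq.eq_2, ih, NNReal.agmSequences_succ']
    simp [add_comm, mul_comm]

theorem tendsto_agmSeq_fst (x y : ℝ≥0) :
    Tendsto (fun n => (agmSeq x y n).1) atTop (𝓝 (NNReal.agm x y)) := by
  rw [← tendsto_add_atTop_iff_nat 1]
  simpa only [agmSeq_succ_eq_agmSequences] using
    NNReal.tendsto_coe.2 (NNReal.tendsto_agmSequences_snd_agm (x := x) (y := y))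

theorem tendsto_agmSeq_snd (x y : ℝ≥0) :
    Tendsto (fun n => (agmSeq x y n).2) atTop (𝓝 (NNReal.agm x y)) := by
  rw [← tendsto_add_atTop_iff_nat 1]
  simpa only [agmSeq_succ_eq_agmSequences] using
    NNReal.tendsto_coe.2 (NNReal.tendsto_agmSequences_fst_agm (x := x) (y := y))

theorem agm_coe (x y : ℝ≥0) : agm x y = NNReal.agm x y :=
  (tendsto_agmSeq_fst x y).limUnder_eq

noncomputable def agmIntegral (a b : ℝ) : ℝ :=
  ∫ θ in (0 : ℝ)..(π / 2), 1 / √(a ^ 2 * cos θ ^ 2 + b ^ 2 * sin θ ^ 2)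

noncomputable def agmIntegralIoi (a b : ℝ) : ℝ :=
  ∫ t in Ioi 0, 1 / √((a ^ 2 + t ^ 2) * (b ^ 2 + t ^ 2))

theorem image_const_mul_tan_Ioo {b : ℝ} (hb : 0 < b) :
    (fun θ => b * tan θ) '' Ioo 0 (π / 2) = Ioi 0 := by
  refine Subset.antisymm ?_ fun t ht => ?_
  · rintro _ ⟨θ, hθ, rfl⟩
    exact mul_pos hb (tan_pos_of_pos_of_lt_pi_div_two hθ.1 hθ.2)
  · refine ⟨arctan (t / b), ⟨?_, arctan_lt_pi_div_two _⟩, ?_⟩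
    · simpa only [arctan_zero] using arctan_strictMono (div_pos ht hb)
    · simp only [tan_arctan]
      field_simp

theorem image_sub_div_Ioi {c : ℝ} (hc : 0 < c) : (fun t => (t - c / t) / 2) '' Ioi 0 = univ := by
  refine eq_univ_of_forall fun u => ?_
  have hD : 0 ≤ u ^ 2 + c := by positivity
  have hroot : 0 < u + √(u ^ 2 + c) := by
    have : |u| < √(u ^ 2 + c) := by
      rw [← Real.sqrt_sq_eq_abs]
      exact Real.sqrt_lt_sqrt (sq_nonneg u) (by linarith)
    linarith [neg_abs_le u]
  refine ⟨u + √(u ^ 2 + c), hroot, ?_⟩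
  field_simp
  linear_combination Real.sq_sqrt hD

section Integrals

variable {a b : ℝ}

theorem agmIntegral_mem_Icc (hb : 0 < b) (hba : b ≤ a) :
    agmIntegral a b ∈ Icc (π / 2 / a) (π / 2 / b) := by
  set f := fun θ => 1 / √(a ^ 2 * cos θ ^ 2 + b ^ 2 * sin θ ^ 2)
  have hE (θ : ℝ) : b ^ 2 ≤ a ^ 2 * cos θ ^ 2 + b ^ 2 * sin θ ^ 2 ∧
      a ^ 2 * cos θ ^ 2 + b ^ 2 * sin θ ^ 2 ≤ a ^ 2 := by
    have hab : b ^ 2 ≤ a ^ 2 := pow_le_pow_left₀ hb.le hba 2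
    constructor <;> nlinarith [sin_sq_add_cos_sq θ, sq_nonneg (cos θ), sq_nonneg (sin θ)]
  have hsqrt (θ : ℝ) : b ≤ √(a ^ 2 * cos θ ^ 2 + b ^ 2 * sin θ ^ 2) :=
    Real.le_sqrt_of_sq_le (hE θ).1
  have hf (θ : ℝ) : 1 / a ≤ f θ ∧ f θ ≤ 1 / b :=
    ⟨one_div_le_one_div_of_le (hb.trans_le (hsqrt θ))
      ((Real.sqrt_le_sqrt (hE θ).2).trans_eq (Real.sqrt_sq (hb.le.trans hba))),
      one_div_le_one_div_of_le hb (hsqrt θ)⟩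
  have hint : IntervalIntegrable f volume 0 (π / 2) :=
    (continuous_const.div (by fun_prop)
      fun θ => (hb.trans_le (hsqrt θ)).ne').intervalIntegrable _ _
  have hpi : (0 : ℝ) ≤ π / 2 := pi_div_two_pos.le
  constructor
  · calc π / 2 / a = ∫ _ in (0 : ℝ)..(π / 2), 1 / a := by
          rw [intervalIntegral.integral_const, smul_eq_mul]; ring
      _ ≤ agmIntegral a b :=
        intervalIntegral.integral_mono_on hpi intervalIntegrable_const hint fun θ _ => (hf θ).1
  · calc agmIntegral a b ≤ ∫ _ in (0 : ℝ)..(π / 2), 1 / b :=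
        intervalIntegral.integral_mono_on hpi hint intervalIntegrable_const fun θ _ => (hf θ).2
      _ = π / 2 / b := by rw [intervalIntegral.integral_const, smul_eq_mul]; ring

theorem agmIntegralIoi_eq_agmIntegral (hb : 0 < b) : agmIntegralIoi a b = agmIntegral a b := by
  have hcos {θ : ℝ} (hθ : θ ∈ Ioo 0 (π / 2)) : 0 < cos θ :=
    cos_pos_of_mem_Ioo ⟨by linarith [hθ.1, pi_div_two_pos], hθ.2⟩
  have hderiv : ∀ θ ∈ Ioo 0 (π / 2),
      HasDerivWithinAt (fun θ => b * tan θ) (b / cos θ ^ 2) (Ioo 0 (π / 2)) θ := fun θ hθ => by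
    simpa [div_eq_mul_inv] using
      ((hasDerivAt_tan (hcos hθ).ne').const_mul b).hasDerivWithinAt
  have hmono : MonotoneOn (fun θ => b * tan θ) (Ioo 0 (π / 2)) := fun x hx y hy hxy =>
    mul_le_mul_of_nonneg_left (strictMonoOn_tan.monotoneOn
      ⟨by linarith [hx.1, pi_div_two_pos], hx.2⟩ ⟨by linarith [hy.1, pi_div_two_pos], hy.2⟩ hxy)
      hb.le
  rw [agmIntegralIoi, ← image_const_mul_tan_Ioo hb,
    integral_image_eq_integral_deriv_smul_of_monotoneOn measurableSet_Ioo hderiv hmono,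
    agmIntegral, intervalIntegral.integral_of_le pi_div_two_pos.le, integral_Ioc_eq_integral_Ioo]
  refine setIntegral_congr_fun measurableSet_Ioo fun θ hθ => ?_
  have hc := hcos hθ
  have hs : 0 < sin θ := sin_pos_of_pos_of_lt_pi hθ.1 (by linarith [hθ.2, pi_pos])
  have hE : 0 < a ^ 2 * cos θ ^ 2 + b ^ 2 * sin θ ^ 2 := by positivity
  have hprod : (a ^ 2 + (b * tan θ) ^ 2) * (b ^ 2 + (b * tan θ) ^ 2) =
      (a ^ 2 * cos θ ^ 2 + b ^ 2 * sin θ ^ 2) * (b / cos θ ^ 2) ^ 2 := by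
    rw [tan_eq_sin_div_cos]
    field_simp
    linear_combination cos_sq_add_sin_sq θ
  simp only [smul_eq_mul]
  rw [hprod, Real.sqrt_mul hE.le, Real.sqrt_sq (by positivity)]
  field_simp

theorem agmIntegralIoi_step (ha : 0 < a) (hb : 0 < b) :
    agmIntegralIoi ((a + b) / 2) (√(a * b)) = agmIntegralIoi a b := by
  have hab : 0 < a * b := mul_pos ha hb
  set g := fun u => 1 / √((((a + b) / 2) ^ 2 + u ^ 2) * (√(a * b) ^ 2 + u ^ 2)) with hg
  have hderiv : ∀ t ∈ Ioi (0 : ℝ),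
      HasDerivWithinAt (fun t => (t - a * b / t) / 2) ((1 + a * b / t ^ 2) / 2) (Ioi 0) t :=
    fun t ht => by
      refine (((hasDerivAt_id' t).sub ((hasDerivAt_const t (a * b)).div (hasDerivAt_id' t)
        (ne_of_gt ht))).div_const 2).hasDerivWithinAt.congr_deriv ?_
      field_simp
      ring
  have hmono : MonotoneOn (fun t => (t - a * b / t) / 2) (Ioi 0) := fun x hx y _ hxy => by
    have := div_le_div_of_nonneg_left hab.le (show (0 : ℝ) < x from hx) hxy
    dsimp only
    linarith
  have hsubst :=
    integral_image_eq_integral_deriv_smul_of_monotoneOn measurableSet_Ioi hderiv hmono g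
  have heven : ∫ u in univ, g u = 2 * agmIntegralIoi ((a + b) / 2) (√(a * b)) :=
    calc ∫ u in univ, g u = ∫ u, g |u| := by simp only [setIntegral_univ, hg, sq_abs]
      _ = _ := integral_comp_abs
  rw [image_sub_div_Ioi hab, heven] at hsubst
  suffices h : ∫ t in Ioi (0 : ℝ), ((1 + a * b / t ^ 2) / 2) • g ((t - a * b / t) / 2) =
      2 * agmIntegralIoi a b by linarith
  rw [agmIntegralIoi, ← integral_const_mul]
  refine setIntegral_congr_fun measurableSet_Ioi fun t (ht : 0 < t) => ?_
  have hP : 0 < (a ^ 2 + t ^ 2) * (b ^ 2 + t ^ 2) := by positivity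
  -- For `u = (t - ab/t) / 2`: `((a + b) / 2)² + u² = (a² + t²)(b² + t²) / (2t)²`
  -- and `ab + u² = ((t² + ab) / 2t)²`.
  have hprod : (((a + b) / 2) ^ 2 + ((t - a * b / t) / 2) ^ 2) *
      (√(a * b) ^ 2 + ((t - a * b / t) / 2) ^ 2) =
      ((a ^ 2 + t ^ 2) * (b ^ 2 + t ^ 2)) * ((t ^ 2 + a * b) / (2 * t) ^ 2) ^ 2 := by
    rw [Real.sq_sqrt hab.le]
    field_simp
    ring
  simp only [hg, smul_eq_mul]
  rw [hprod, Real.sqrt_mul hP.le, Real.sqrt_sq (by positivity)]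
  have hsP := Real.sqrt_pos.2 hP
  generalize √((a ^ 2 + t ^ 2) * (b ^ 2 + t ^ 2)) = s at hsP ⊢
  field_simp

theorem agmIntegral_step (ha : 0 < a) (hb : 0 < b) :
    agmIntegral ((a + b) / 2) (√(a * b)) = agmIntegral a b := by
  rw [← agmIntegralIoi_eq_agmIntegral hb, ← agmIntegralIoi_step ha hb,
    agmIntegralIoi_eq_agmIntegral (Real.sqrt_pos.2 (mul_pos ha hb))]

theorem agmIntegral_agmSeq (ha : 0 < a) (hb : 0 < b) (n : ℕ) :
    agmIntegral (agmSeq a b n).1 (agmSeq a b n).2 = agmIntegral a b := by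
  induction n generalizing a b with
  | zero => rfl
  | succ n ih =>
    rw [agmSeq_succ', ih (by positivity) (Real.sqrt_pos.2 (mul_pos ha hb)), agmIntegral_step ha hb]

theorem agmIntegral_eq_pi_div_two_div_agm (ha : 0 < a) (hb : 0 < b) :
    agmIntegral a b = π / 2 / agm a b := by
  lift a to ℝ≥0 using ha.le
  lift b to ℝ≥0 using hb.le
  rw [agm_coe]
  have hM : (NNReal.agm a b : ℝ) ≠ 0 := NNReal.coe_ne_zero.2 (NNReal.agm_pos ha hb).ne'
  have hmem (n : ℕ) : agmIntegral a b ∈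
      Icc (π / 2 / (agmSeq a b (n + 1)).1) (π / 2 / (agmSeq a b (n + 1)).2) := by
    have hgm : 0 < NNReal.sqrt (a * b) := NNReal.sqrt_pos.2 (mul_pos ha hb)
    rw [← agmIntegral_agmSeq ha hb (n + 1), agmSeq_succ_eq_agmSequences]
    exact agmIntegral_mem_Icc (hgm.trans_le (NNReal.agmSequences_fst_monotone (Nat.zero_le n)))
      (NNReal.agmSequences_fst_le_snd n n)
  have hlim {u : ℕ → ℝ} (hu : Tendsto u atTop (𝓝 (NNReal.agm a b))) :
      Tendsto (fun n => π / 2 / u (n + 1)) atTop (𝓝 (π / 2 / NNReal.agm a b)) :=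
    tendsto_const_nhds.div ((tendsto_add_atTop_iff_nat 1).2 hu) hM
  exact le_antisymm (ge_of_tendsto' (hlim (tendsto_agmSeq_snd a b)) fun n => (hmem n).2)
    (le_of_tendsto' (hlim (tendsto_agmSeq_fst a b)) fun n => (hmem n).1)

end Integrals

/-- Gauss' theorem relating the complete elliptic integral of the first kind
to the arithmetic–geometric mean. -/
theorem gauss_ellipticK_agm (x : ℝ) (hx : |x| < 1) :
    ellipticK x = (π / 2) * (1 / agm (1 + x) (1 - x)) := by
  obtain ⟨hx₁, hx₂⟩ := abs_lt.1 hx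
  have hpos : 0 < 1 - x ^ 2 := by nlinarith
  calc ellipticK x = agmIntegral 1 √(1 - x ^ 2) := by
        refine intervalIntegral.integral_congr fun θ _ => ?_
        simp only [Real.sq_sqrt hpos.le]
        congr 2
        linear_combination -cos_sq_add_sin_sq θ
    _ = agmIntegral (1 + x) (1 - x) := by
        rw [← agmIntegral_step (a := 1 + x) (b := 1 - x) (by linarith) (by linarith)]
        congr 1 <;> ring_nf
    _ = π / 2 * (1 / agm (1 + x) (1 - x)) := by
        rw [agmIntegral_eq_pi_div_two_div_agm (by linarith) (by linarith), mul_one_div]
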